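/- Let v1,v2,v3,v4 ∈ ℝ² form a convex quadrilateral in counterclockwise cyclic order. Then for every p ∈ ℝ², the moment system matrix M(p) is invertible. -/

import Mathlib

open Matrix

/-- Signed area of the triangle `(a,b,c)` in the plane. -/
noncomputable def sArea (a b c : EuclideanSpace ℝ (Fin 2)) : ℝ :=
  ((b 0 - a 0) * (c 1 - a 1) - (b 1 - a 1) * (c 0 - a 0)) / 2

/-- `v` lists the vertices of a convex quadrilateral in counterclockwise cyclic order. -/
def ConvexCCW (v : Fin 4 → EuclideanSpace ℝ (Fin 2)) : Prop :=
  ∀ i : Fin 4, 0 < sArea (v i) (v (i + 1)) (v (i + 2))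

/-- The moment system matrix `M(p)`: rows `(1,1,1,1)`, the two coordinate rows of the
vertices, and `(d₁(p), -d₂(p), d₃(p), -d₄(p))` where `dᵢ(p) = ‖p - vᵢ‖`. -/
noncomputable def momentMatrix (v : Fin 4 → EuclideanSpace ℝ (Fin 2))
    (p : EuclideanSpace ℝ (Fin 2)) : Matrix (Fin 4) (Fin 4) ℝ :=
  Matrix.of ![fun i => 1, fun i => v i 0, fun i => v i 1,
              ![‖p - v 0‖, -‖p - v 1‖, ‖p - v 2‖, -‖p - v 3‖]]

/-!
Expanding `det M(p)` along its last row gives `-2 ∑ᵢ dᵢ(p) · S(vᵢ₊₁, vᵢ₊₂, vᵢ₊₃)`: the alternating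
signs of that row cancel those of the cofactors. Every area is positive by convexity, and the
distances are nonnegative and not all zero, since `p` cannot coincide with two distinct vertices.
-/

theorem det_momentMatrix (v : Fin 4 → EuclideanSpace ℝ (Fin 2)) (p : EuclideanSpace ℝ (Fin 2)) :
    (momentMatrix v p).det =
      -2 * ∑ i, ‖p - v i‖ * sArea (v (i + 1)) (v (i + 2)) (v (i + 3)) := by
  rw [det_succ_row _ 3]
  simp only [Nat.succ_eq_add_one, Nat.reduceAdd, Fin.isValue, Fin.coe_ofNat_eq_mod, Nat.mod_succ,
    momentMatrix, of_apply, cons_val', cons_val_fin_one, cons_val, cons_val_one, det_fin_three,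
    submatrix_apply, Fin.succAbove, Fin.castSucc_zero, Fin.reduceLT, ↓reduceIte,
    Fin.succ_zero_eq_one, cons_val_zero, Fin.castSucc_one, Fin.succ_one_eq_two, one_mul,
    Fin.reduceCastSucc, Fin.reduceSucc, Fin.sum_univ_four, Nat.zero_mod, add_zero, not_lt_zero,
    lt_self_iff_false, Nat.one_mod, mul_neg, Fin.lt_one_iff, Fin.reduceEq, zero_lt_one, neg_mul,
    Nat.reduceMod, sArea, zero_add, Fin.reduceAdd]
  ring

theorem sArea_self_left (a c : EuclideanSpace ℝ (Fin 2)) : sArea a a c = 0 := by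
  simp [sArea]

namespace ConvexCCW

variable {v : Fin 4 → EuclideanSpace ℝ (Fin 2)}

theorem sArea_succ_pos (hv : ConvexCCW v) (i : Fin 4) :
    0 < sArea (v (i + 1)) (v (i + 2)) (v (i + 3)) := by
  simpa only [add_assoc, show (1 + 1 : Fin 4) = 2 from rfl, show (1 + 2 : Fin 4) = 3 from rfl]
    using hv (i + 1)

theorem apply_ne_apply_succ (hv : ConvexCCW v) (i : Fin 4) : v i ≠ v (i + 1) := fun h =>
  (hv i).ne' (by rw [h, sArea_self_left])

theorem exists_ne (hv : ConvexCCW v) (p : EuclideanSpace ℝ (Fin 2)) : ∃ i, p ≠ v i := by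
  by_contra! h
  exact hv.apply_ne_apply_succ 0 ((h 0).symm.trans (h 1))

end ConvexCCW

/-- For a convex quadrilateral (counterclockwise cyclic order), the moment
system matrix `M(p)` is invertible for every point `p` of the plane. -/
theorem momentMatrix_isUnit (v : Fin 4 → EuclideanSpace ℝ (Fin 2))
    (hccw : ConvexCCW v) (p : EuclideanSpace ℝ (Fin 2)) :
    IsUnit (momentMatrix v p) := by
  rw [isUnit_iff_isUnit_det, isUnit_iff_ne_zero, det_momentMatrix]
  obtain ⟨i, hi⟩ := hccw.exists_ne p
  have hsum : 0 < ∑ j, ‖p - v j‖ * sArea (v (j + 1)) (v (j + 2)) (v (j + 3)) :=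
    Finset.sum_pos' (fun j _ => mul_nonneg (norm_nonneg _) (hccw.sArea_succ_pos j).le)
      ⟨i, Finset.mem_univ i, mul_pos (norm_pos_iff.2 (sub_ne_zero.2 hi)) (hccw.sArea_succ_pos i)⟩
  linarith
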